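/- arXiv:2103.05316 — 2 statements merged into one kernel-verified Lean document; each statement's English description precedes it below -/
import Mathlib

section
/- Fix p, d with pd < 1 and s ∈ ℝ, and for each k set q = (1−pd)/d^k + s/d^{2k}. Then d^k · Σ_{A ∈ 𝒜, |A| ≥ 3} M̄(A)·|A|² → 0 as k → ∞. -/
open MeasureTheory ProbabilityTheory Filter

/-- Vertices of the tree `T_{d,k}`: finite sequences over `[d]`. The root is `[]`. -/
abbrev Vert (d : ℕ) := List (Fin d)

/-- A percolation configuration: a Boolean (open/closed) for every pair `(v, s)`;
the pair `(v, s)` represents the oriented edge from `v` to `v ++ s`.  Only pairs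
with `s.length = 1` (short edges) or `s.length = k` (long edges) are actual edges. -/
abbrev Config (d : ℕ) := (Vert d × List (Fin d)) → Bool

/-- One open oriented edge step from `v` to `w`. -/
def step (d k : ℕ) (ω : Config d) (v w : Vert d) : Prop :=
  ∃ s : List (Fin d), (s.length = 1 ∨ s.length = k) ∧ w = v ++ s ∧ ω (v, s) = true

/-- The cluster of a set `B` of vertices: all vertices reachable from `B`
by an oriented path of open edges (with the convention `B ⊆ cluster`). -/
def cluster (d k : ℕ) (ω : Config d) (B : Set (Vert d)) : Set (Vert d) :=
  {w | ∃ v ∈ B, Relation.ReflTransGen (step d k ω) v w}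

/-- `μ` is the law of Bernoulli bond percolation on `T_{d,k}` in which,
independently, every short edge is open with probability `p` and every
long edge is open with probability `q`. -/
def IsPercolation (d k : ℕ) (p q : ℝ) (μ : Measure (Config d)) : Prop :=
  IsProbabilityMeasure μ ∧
  iIndepFun (fun e (ω : Config d) => ω e) μ ∧
  (∀ v : Vert d, ∀ s : List (Fin d), s.length = 1 →
      (μ {ω | ω (v, s) = true}).toReal = p) ∧
  (∀ v : Vert d, ∀ s : List (Fin d), s.length = k →
      (μ {ω | ω (v, s) = true}).toReal = q)


/-- One open *short* edge step from `v` to `w`. -/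
def shortStep (d : ℕ) (ω : Config d) (v w : Vert d) : Prop :=
  ∃ s : List (Fin d), s.length = 1 ∧ w = v ++ s ∧ ω (v, s) = true

/-- `C_s^B`: the short cluster of `B`, i.e. all vertices reachable from `B` by oriented
open paths using only short edges (with `B ⊆ C_s^B`). -/
def shortCluster (d : ℕ) (ω : Config d) (B : Set (Vert d)) : Set (Vert d) :=
  {w | ∃ v ∈ B, Relation.ReflTransGen (shortStep d ω) v w}

/-- `C_ℓ^B`: the vertices outside `C_s^B` which are endpoints of open long edges
starting in `C_s^B`. -/
def longCluster (d k : ℕ) (ω : Config d) (B : Set (Vert d)) : Set (Vert d) :=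
  {w | w ∉ shortCluster d ω B ∧ ∃ v ∈ shortCluster d ω B,
    ∃ s : List (Fin d), s.length = k ∧ w = v ++ s ∧ ω (v, s) = true}

/-- `V^v`: the full subtree rooted at `v`. -/
def subtree {d : ℕ} (v : Vert d) : Set (Vert d) := {w | ∃ s : List (Fin d), w = v ++ s}

/-- `V_Γ^v`: the subtree of height `k - 1` rooted at `v`. -/
def gammaSet (d k : ℕ) (v : Vert d) : Set (Vert d) :=
  {w | ∃ s : List (Fin d), s.length < k ∧ w = v ++ s}

/-- A set `B` of vertices is admissible if `B ⊆ V_Γ^u` for some (necessarily unique)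
`u ∈ B`, called the base of `B`. -/
def Admissible (d k : ℕ) (B : Set (Vert d)) : Prop :=
  ∃ u ∈ B, B ⊆ gammaSet d k u

/-- The base `b(B)` of an admissible set `B`. -/
noncomputable def base (d k : ℕ) (B : Set (Vert d)) : Vert d :=
  haveI := Classical.dec (Admissible d k B)
  if h : Admissible d k B then h.choose else []

/-- The relation on `C_ℓ^B`: `u` and `v` are related iff there is `w ∈ C_ℓ^B` with
`u, v ∈ V^w` (for admissible `B` this is an equivalence relation on `C_ℓ^B`). -/
def longRel (d k : ℕ) (ω : Config d) (B : Set (Vert d)) (u v : Vert d) : Prop :=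
  u ∈ longCluster d k ω B ∧ v ∈ longCluster d k ω B ∧
    ∃ w ∈ longCluster d k ω B, u ∈ subtree w ∧ v ∈ subtree w

/-- `ℬ^B`: the collection of equivalence classes of `C_ℓ^B` under `longRel`. -/
def longClasses (d k : ℕ) (ω : Config d) (B : Set (Vert d)) : Set (Set (Vert d)) :=
  {S | ∃ u ∈ longCluster d k ω B, S = {v | longRel d k ω B u v}}

/-- The type `t(B)` of an admissible set `B`: the set of words that must be concatenated
with the base of `B` to produce `B`. -/
noncomputable def typeOf (d k : ℕ) (B : Set (Vert d)) : Set (Vert d) :=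
  {v | v ∈ gammaSet d k ([] : Vert d) ∧ base d k B ++ v ∈ B}

/-- `𝒜`: the set of types, i.e. admissible sets based at the root. -/
def typeSpace (d k : ℕ) : Set (Set (Vert d)) :=
  {A | ([] : Vert d) ∈ A ∧ A ⊆ gammaSet d k ([] : Vert d)}

open scoped ENNReal
open MeasureTheory in
/-- The mean offspring matrix of the exploration branching process:
`M(A, A') = E[#{B' ∈ ℬ^B : t(B') = A'}]` for `B` an admissible set of type `A`
(we take the canonical representative `B = A`, which is admissible with base the root). -/
noncomputable def meanOffspring (d k : ℕ) (μ : Measure (Config d))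
    (A A' : Set (Vert d)) : ℝ≥0∞ :=
  ∫⁻ ω, ({B' | B' ∈ longClasses d k ω A ∧ typeOf d k B' = A'}.encard : ℕ∞) ∂μ

open MeasureTheory in
/-- `M̄(A)`: the expected number of vertices `v ∈ C_ℓ^{{o}}` such that
`C_ℓ^{{o}} ∩ V^v ⊇ {v·u : u ∈ A}`. -/
noncomputable def meanUpper (d k : ℕ) (μ : Measure (Config d))
    (A : Set (Vert d)) : ℝ≥0∞ :=
  ∫⁻ ω, ({v | v ∈ longCluster d k ω {([] : Vert d)} ∧
      ∀ u ∈ A, v ++ u ∈ longCluster d k ω {([] : Vert d)}}.encard : ℕ∞) ∂μ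

/-- The height `h(A) = sup_{v ∈ A} h(v)` of a set of vertices. -/
noncomputable def heightSet {d : ℕ} (A : Set (Vert d)) : ℕ :=
  sSup (List.length '' A)

/-- The parametrization `q = (1-pd)/d^k + s/d^{2k}` of Section 3.3. -/
noncomputable def qparam (d : ℕ) (p s : ℝ) (k : ℕ) : ℝ :=
  (1 - p * d) / (d : ℝ) ^ k + s / (d : ℝ) ^ (2 * k)

/-!
An element of `C_ℓ^{{o}}` at height `m` carrying a copy of a type `A` of height `h` forces a
short open path of length `m - k + h` and `|A|` open long edges, so by independence
`M̄(A) ≤ d^k p^h q^{|A|} / (1 - p d)`. A type is its root together with at least two further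
vertices in the ball of radius `h`, whose size is below `d^{h+1}`; summing binomially over these
subsets gives `Σ_{|A| ≥ 3} M̄(A) |A|² ≲ d^k q³ Σ_{h < k} (p d²)^h`. With `q ≍ d^{-k}`, after
multiplying by `d^k` this is `≲ d^{-k} Σ_{h < k} (p d²)^h ≤ k · max(p d, 1/d)^k → 0`.
-/

namespace IsPercolation

variable {d k : ℕ} {p q : ℝ} {μ : Measure (Config d)}

lemma measure_open_short (hμ : IsPercolation d k p q μ) {e : Vert d × List (Fin d)}
    (he : e.2.length = 1) : μ {ω | ω e = true} = ENNReal.ofReal p := by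
  have := hμ.1
  rw [← hμ.2.2.1 e.1 e.2 he, ENNReal.ofReal_toReal (measure_ne_top μ _)]

lemma measure_open_long (hμ : IsPercolation d k p q μ) {e : Vert d × List (Fin d)}
    (he : e.2.length = k) : μ {ω | ω e = true} = ENNReal.ofReal q := by
  have := hμ.1
  rw [← hμ.2.2.2 e.1 e.2 he, ENNReal.ofReal_toReal (measure_ne_top μ _)]

lemma measure_forall_open (hμ : IsPercolation d k p q μ) (E : Finset (Vert d × List (Fin d))) :
    μ {ω | ∀ e ∈ E, ω e = true} = ∏ e ∈ E, μ {ω | ω e = true} := by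
  have := hμ.2.1.measure_inter_preimage_eq_mul E (sets := fun _ => {true})
    fun _ _ => measurableSet_singleton true
  convert this using 2
  · ext; simp
  · rfl

lemma measure_forall_open_union (hμ : IsPercolation d k p q μ) (hk : k ≠ 1)
    {S L : Finset (Vert d × List (Fin d))} (hS : ∀ e ∈ S, e.2.length = 1)
    (hL : ∀ e ∈ L, e.2.length = k) :
    μ {ω | ∀ e ∈ S ∪ L, ω e = true} = ENNReal.ofReal p ^ S.card * ENNReal.ofReal q ^ L.card := by
  have hdisj : Disjoint S L :=
    Finset.disjoint_left.2 fun e heS heL => hk ((hL e heL).symm.trans (hS e heS))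
  rw [hμ.measure_forall_open, Finset.prod_union hdisj,
    Finset.prod_congr rfl fun e he => hμ.measure_open_short (hS e he),
    Finset.prod_congr rfl fun e he => hμ.measure_open_long (hL e he),
    Finset.prod_const, Finset.prod_const]

end IsPercolation

section Paths

variable {d k : ℕ}

def rootPath (w : Vert d) : Finset (Vert d × List (Fin d)) :=
  (Finset.range w.length).image fun j => (w.take j, (w.drop j).take 1)

lemma mem_rootPath {w : Vert d} {e : Vert d × List (Fin d)} (he : e ∈ rootPath w) :
    e.2.length = 1 ∧ e.1 ++ e.2 <+: w := by
  obtain ⟨j, hj, rfl⟩ := Finset.mem_image.1 he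
  rw [Finset.mem_range] at hj
  refine ⟨by simp; omega, ?_⟩
  rw [← List.take_add]
  exact List.take_prefix _ _

lemma card_rootPath (w : Vert d) : (rootPath w).card = w.length := by
  rw [rootPath, Finset.card_image_of_injOn, Finset.card_range]
  intro i hi j hj hij
  simp only [Finset.coe_range, Set.mem_Iio] at hi hj
  simpa [hi.le, hj.le] using congrArg (fun e : Vert d × List (Fin d) => e.1.length) hij

lemma shortCluster_root_edge_open {ω : Config d} {w : Vert d}
    (hw : w ∈ shortCluster d ω {[]}) {y t : Vert d} (ht : t.length = 1) (hyt : y ++ t <+: w) :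
    ω (y, t) = true := by
  obtain ⟨_, rfl, hpath⟩ := hw
  induction hpath with
  | refl => simpa [ht] using hyt.length_le
  | tail _ hstep ih =>
    obtain ⟨s, hs, rfl, hopen⟩ := hstep
    obtain ⟨a, rfl⟩ := List.length_eq_one_iff.1 hs
    obtain ⟨c, rfl⟩ := List.length_eq_one_iff.1 ht
    rcases List.prefix_concat_iff.1 hyt with heq | hpre
    · obtain ⟨rfl, hca⟩ := List.append_inj' heq rfl
      rwa [hca]
    · exact ih hpre

lemma rootPath_open_of_mem_shortCluster {ω : Config d} {w : Vert d}
    (hw : w ∈ shortCluster d ω {[]}) : ∀ e ∈ rootPath w, ω e = true := fun _ he =>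
  shortCluster_root_edge_open hw (mem_rootPath he).1 (mem_rootPath he).2

/-- An edge of the tree only when `k ≤ w.length`. -/
def longEdgeTo (k : ℕ) (w : Vert d) : Vert d × List (Fin d) :=
  (w.take (w.length - k), w.drop (w.length - k))

lemma longEdgeTo_injective : Function.Injective (longEdgeTo (d := d) k) := fun v w h => by
  simpa [longEdgeTo] using congrArg (fun e : Vert d × List (Fin d) => e.1 ++ e.2) h

lemma length_longEdgeTo_snd {w : Vert d} (hw : k ≤ w.length) :
    (longEdgeTo k w).2.length = k := by
  simp [longEdgeTo]; omega

lemma longEdgeTo_of_mem_longCluster {ω : Config d} {w : Vert d}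
    (hw : w ∈ longCluster d k ω {[]}) :
    k ≤ w.length ∧ (longEdgeTo k w).1 ∈ shortCluster d ω {[]} ∧ ω (longEdgeTo k w) = true := by
  obtain ⟨-, x, hx, s, hs, rfl, hopen⟩ := hw
  have hx' : (x ++ s).length - k = x.length := by simp [hs]
  simp only [longEdgeTo, hx', List.take_left, List.drop_left]
  exact ⟨by simp [hs], hx, hopen⟩

end Paths

lemma lintegral_encard_setOf_mem {Ω ι : Type*} [MeasurableSpace Ω] [Countable ι]
    (μ : Measure Ω) {G : ι → Set Ω} (hG : ∀ i, MeasurableSet (G i)) :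
    ∫⁻ ω, (({i | ω ∈ G i}.encard : ℕ∞) : ℝ≥0∞) ∂μ = ∑' i, μ (G i) := by
  have hcount : ∀ ω, (({i | ω ∈ G i}.encard : ℕ∞) : ℝ≥0∞) = ∑' i, (G i).indicator 1 ω := by
    intro ω
    rw [← ENNReal.tsum_set_one]
    exact tsum_subtype {i | ω ∈ G i} (fun _ => (1 : ℝ≥0∞))
  simp_rw [hcount]
  rw [lintegral_tsum fun i => (measurable_one.indicator (hG i)).aemeasurable]
  simp_rw [lintegral_indicator_one (hG _)]

lemma tsum_list_length {α : Type*} [Fintype α] (c : ℕ → ℝ≥0∞) :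
    ∑' l : List α, c l.length = ∑' m : ℕ, (Fintype.card α : ℝ≥0∞) ^ m * c m := by
  rw [← List.equivSigmaTuple.symm.tsum_eq, ENNReal.tsum_sigma']
  congr 1 with m
  simp [List.equivSigmaTuple, tsum_fintype, Finset.sum_const]

lemma tsum_pow_mul_ite_pow_sub (D P : ℝ≥0∞) (k : ℕ) :
    ∑' m : ℕ, D ^ m * (if k ≤ m then P ^ (m - k) else 0) = D ^ k * (1 - D * P)⁻¹ := by
  rw [← Summable.sum_add_tsum_nat_add' (k := k)
      (f := fun m => D ^ m * (if k ≤ m then P ^ (m - k) else 0)) ENNReal.summable,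
    Finset.sum_eq_zero fun m hm => by simp [Nat.not_le.2 (Finset.mem_range.1 hm)], zero_add,
    ← ENNReal.tsum_geometric, ← ENNReal.tsum_mul_left]
  congr 1 with j
  simp [pow_add, mul_pow]
  ring

section MeanUpper

variable {d k : ℕ} {p q : ℝ} {μ : Measure (Config d)}

def witnessEdges (k : ℕ) (v u₀ : Vert d) (A : Finset (Vert d)) :
    Finset (Vert d × List (Fin d)) :=
  rootPath (longEdgeTo k (v ++ u₀)).1 ∪ A.image fun u => longEdgeTo k (v ++ u)

lemma witnessEdges_open {ω : Config d} {v u₀ : Vert d} {A : Finset (Vert d)} (hu₀ : u₀ ∈ A)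
    (hA : ∀ u ∈ A, v ++ u ∈ longCluster d k ω {[]}) :
    ∀ e ∈ witnessEdges k v u₀ A, ω e = true := by
  intro e he
  rcases Finset.mem_union.1 he with he | he
  · exact rootPath_open_of_mem_shortCluster (longEdgeTo_of_mem_longCluster (hA u₀ hu₀)).2.1 e he
  · obtain ⟨u, hu, rfl⟩ := Finset.mem_image.1 he
    exact (longEdgeTo_of_mem_longCluster (hA u hu)).2.2

lemma IsPercolation.measure_witnessEdges_open (hμ : IsPercolation d k p q μ) (hk : k ≠ 1)
    {v : Vert d} (hv : k ≤ v.length) (u₀ : Vert d) (A : Finset (Vert d)) :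
    μ {ω | ∀ e ∈ witnessEdges k v u₀ A, ω e = true}
      = ENNReal.ofReal p ^ (v.length - k + u₀.length) * ENNReal.ofReal q ^ A.card := by
  rw [witnessEdges, hμ.measure_forall_open_union hk (fun _ he => (mem_rootPath he).1),
    card_rootPath, Finset.card_image_of_injective A (f := fun u => longEdgeTo k (v ++ u))
      (longEdgeTo_injective.comp (List.append_right_injective v))]
  · congr 2
    simp [longEdgeTo]
    omega
  · simp only [Finset.mem_image, forall_exists_index, and_imp]
    rintro _ u - rfl
    exact length_longEdgeTo_snd (by simp; omega)

theorem meanUpper_le (hμ : IsPercolation d k p q μ) (hk : k ≠ 1) {A : Finset (Vert d)}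
    {u₀ : Vert d} (hu₀ : u₀ ∈ A) :
    meanUpper d k μ A ≤ (d : ℝ≥0∞) ^ k * ENNReal.ofReal p ^ u₀.length *
      ENNReal.ofReal q ^ A.card * (1 - d * ENNReal.ofReal p)⁻¹ := by
  set G : Vert d → Set (Config d) :=
    fun v => {ω | k ≤ v.length ∧ ∀ e ∈ witnessEdges k v u₀ A, ω e = true}
  have hG : ∀ v, MeasurableSet (G v) := fun v => by measurability
  have hGμ : ∀ v, μ (G v) = (if k ≤ v.length then ENNReal.ofReal p ^ (v.length - k) else 0) *
      (ENNReal.ofReal p ^ u₀.length * ENNReal.ofReal q ^ A.card) := by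
    intro v
    by_cases hv : k ≤ v.length
    · simp only [G, hv, true_and, if_true, hμ.measure_witnessEdges_open hk hv, pow_add, mul_assoc]
    · simp [G, hv]
  calc meanUpper d k μ A ≤ ∫⁻ ω, (({v | ω ∈ G v}.encard : ℕ∞) : ℝ≥0∞) ∂μ := by
        refine lintegral_mono fun ω => ENat.toENNReal_le.2 (Set.encard_le_encard ?_)
        rintro v ⟨hv, hA⟩
        exact ⟨(longEdgeTo_of_mem_longCluster hv).1, witnessEdges_open (by simpa using hu₀) hA⟩
    _ = ∑' v : Vert d, μ (G v) := lintegral_encard_setOf_mem μ hG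
    _ = _ := by
        simp_rw [hGμ, ENNReal.tsum_mul_right]
        rw [tsum_list_length (fun m => if k ≤ m then ENNReal.ofReal p ^ (m - k) else 0),
          Fintype.card_fin, tsum_pow_mul_ite_pow_sub]
        ring

end MeanUpper

section Counting

def treeBall (d h : ℕ) : Finset (Vert d) :=
  (Finset.range (h + 1)).biUnion fun m =>
    Finset.univ.image (List.ofFn : (Fin m → Fin d) → Vert d)

lemma mem_treeBall {d h : ℕ} {u : Vert d} (hu : u.length ≤ h) : u ∈ treeBall d h :=
  Finset.mem_biUnion.2 ⟨u.length, Finset.mem_range.2 (Nat.lt_succ_of_le hu),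
    Finset.mem_image.2 ⟨u.get, Finset.mem_univ _, List.ofFn_get u⟩⟩

lemma card_treeBall_lt {d : ℕ} (hd : 2 ≤ d) (h : ℕ) : (treeBall d h).card < d ^ (h + 1) :=
  calc (treeBall d h).card ≤ ∑ m ∈ Finset.range (h + 1), d ^ m :=
        Finset.card_biUnion_le.trans <| Finset.sum_le_sum fun m _ =>
          Finset.card_image_le.trans (by simp)
    _ < d ^ (h + 1) := Nat.geomSum_lt hd fun _ => Finset.mem_range.1

lemma succ_sq_mul_choose_le {M j : ℕ} (hj : 2 ≤ j) :
    (j + 1) ^ 2 * M.choose j ≤ 9 * M ^ 2 * (M - 2).choose (j - 2) := by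
  have hj2 : (j + 1) ^ 2 ≤ 9 * j.choose 2 := by
    obtain ⟨i, rfl⟩ : ∃ i, j = i + 2 := ⟨j - 2, by omega⟩
    have h := Nat.add_one_mul_choose_eq (i + 1) 1
    rw [Nat.choose_one_right] at h
    nlinarith
  calc (j + 1) ^ 2 * M.choose j ≤ 9 * (M.choose j * j.choose 2) := by
        rw [mul_comm, mul_left_comm]; exact Nat.mul_le_mul_left _ hj2
    _ = 9 * (M.choose 2 * (M - 2).choose (j - 2)) := by rw [Nat.choose_mul hj]
    _ ≤ 9 * M ^ 2 * (M - 2).choose (j - 2) := by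
        rw [← mul_assoc]; gcongr; exact Nat.choose_le_pow M 2

lemma sum_powerset_le {α : Type*} (S : Finset α) (Q : ℝ≥0∞) :
    ∑ F ∈ S.powerset, (if 2 ≤ F.card then Q ^ F.card * ((F.card : ℝ≥0∞) + 1) ^ 2 else 0)
      ≤ 9 * (S.card : ℝ≥0∞) ^ 2 * Q ^ 2 * (1 + Q) ^ S.card := by
  obtain hS | ⟨m, hm⟩ : S.card < 2 ∨ ∃ m, S.card = m + 2 :=
    (lt_or_ge _ _).imp_right fun h => ⟨S.card - 2, by omega⟩
  · refine (Finset.sum_eq_zero fun F hF => if_neg ?_).trans_le zero_le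
    have := Finset.card_le_card (Finset.mem_powerset.1 hF)
    omega
  rw [Finset.sum_powerset_apply_card
    (fun j => if 2 ≤ j then Q ^ j * ((j : ℝ≥0∞) + 1) ^ 2 else 0), hm]
  calc ∑ j ∈ Finset.range (m + 2 + 1), (m + 2).choose j •
        (if 2 ≤ j then Q ^ j * ((j : ℝ≥0∞) + 1) ^ 2 else 0)
      ≤ ∑ j ∈ Finset.range (m + 2 + 1), 9 * ((m + 2 : ℕ) : ℝ≥0∞) ^ 2 * Q ^ 2 *
          (if 2 ≤ j then (m.choose (j - 2) : ℝ≥0∞) * Q ^ (j - 2) else 0) := by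
        refine Finset.sum_le_sum fun j _ => ?_
        split_ifs with hj
        · have hcast : (((j + 1) ^ 2 * (m + 2).choose j : ℕ) : ℝ≥0∞)
              ≤ ((9 * (m + 2) ^ 2 * m.choose (j - 2) : ℕ) : ℝ≥0∞) :=
            Nat.cast_le.2 (succ_sq_mul_choose_le hj)
          push_cast at hcast
          calc (m + 2).choose j • (Q ^ j * ((j : ℝ≥0∞) + 1) ^ 2)
              = ((j : ℝ≥0∞) + 1) ^ 2 * ((m + 2).choose j) * (Q ^ 2 * Q ^ (j - 2)) := by
                rw [nsmul_eq_mul, ← pow_add, Nat.add_sub_cancel' hj]; ring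
            _ ≤ 9 * ((m : ℝ≥0∞) + 2) ^ 2 * (m.choose (j - 2)) * (Q ^ 2 * Q ^ (j - 2)) := by
                gcongr
            _ = _ := by push_cast; ring
        · simp
    _ = 9 * ((m + 2 : ℕ) : ℝ≥0∞) ^ 2 * Q ^ 2 * (Q + 1) ^ m := by
        rw [← Finset.mul_sum, Finset.sum_range_succ', Finset.sum_range_succ', add_pow]
        simp [mul_comm]
    _ ≤ 9 * ((m + 2 : ℕ) : ℝ≥0∞) ^ 2 * Q ^ 2 * (1 + Q) ^ (m + 2) := by
        rw [add_comm Q]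
        gcongr
        · exact le_self_add
        · omega

end Counting

section Types

variable {d k : ℕ}

lemma finite_of_mem_typeSpace {A : Set (Vert d)} (hA : A ∈ typeSpace d k) : A.Finite :=
  (List.finite_length_lt (Fin d) k).subset fun u hu => by
    obtain ⟨s, hs, rfl⟩ := hA.2 hu
    exact hs

lemma length_le_heightSet {A : Set (Vert d)} (hA : A.Finite) {u : Vert d} (hu : u ∈ A) :
    u.length ≤ heightSet A :=
  le_csSup (hA.image _).bddAbove ⟨u, hu, rfl⟩

lemma exists_length_eq_heightSet {A : Set (Vert d)} (hA : A.Finite) (hne : A.Nonempty) :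
    ∃ u ∈ A, u.length = heightSet A :=
  Nat.sSup_mem (hne.image _) (hA.image _).bddAbove

lemma heightSet_lt {A : Set (Vert d)} (hA : A ∈ typeSpace d k) : heightSet A < k := by
  obtain ⟨u, hu, hlen⟩ := exists_length_eq_heightSet (finite_of_mem_typeSpace hA) ⟨_, hA.1⟩
  obtain ⟨s, hs, rfl⟩ := hA.2 hu
  simpa [← hlen] using hs

abbrev LargeType (d k : ℕ) := {A : Set (Vert d) // A ∈ typeSpace d k ∧ 3 ≤ A.encard}

/-- A large type is determined by its height and its non-root vertices, which form a set of at
least two vertices of the ball of that height. -/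
lemma tsum_largeType_le_sum_powerset (P Q : ℝ≥0∞) :
    ∑' A : LargeType d k, P ^ heightSet A.1 * Q ^ A.1.ncard * (A.1.ncard : ℝ≥0∞) ^ 2
      ≤ ∑ h ∈ Finset.range k, P ^ h * Q * ∑ F ∈ (treeBall d h).powerset,
          (if 2 ≤ F.card then Q ^ F.card * ((F.card : ℝ≥0∞) + 1) ^ 2 else 0) := by
  classical
  set φ : Finset (Vert d) → ℝ≥0∞ :=
    fun F => if 2 ≤ F.card then Q ^ F.card * ((F.card : ℝ≥0∞) + 1) ^ 2 else 0
  set g : ℕ × Finset (Vert d) → ℝ≥0∞ :=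
    fun x => if x.1 < k ∧ x.2 ∈ (treeBall d x.1).powerset then P ^ x.1 * Q * φ x.2 else 0
  have hfin (A : LargeType d k) : A.1.Finite := finite_of_mem_typeSpace A.2.1
  set ι : LargeType d k → ℕ × Finset (Vert d) :=
    fun A => (heightSet A.1, (hfin A).toFinset.erase [])
  have hι : Function.Injective ι := by
    intro A B hAB
    have h := congrArg (insert [] ∘ Prod.snd) hAB
    simp only [ι, Function.comp_apply, Finset.insert_erase ((hfin _).mem_toFinset.2 (A.2.1.1)),
      Finset.insert_erase ((hfin _).mem_toFinset.2 (B.2.1.1)), Set.Finite.toFinset_inj] at h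
    exact Subtype.ext h
  have hfg (A : LargeType d k) :
      P ^ heightSet A.1 * Q ^ A.1.ncard * (A.1.ncard : ℝ≥0∞) ^ 2 = g (ι A) := by
    have hcard : A.1.ncard = ((hfin A).toFinset.erase []).card + 1 := by
      rw [Finset.card_erase_add_one ((hfin A).mem_toFinset.2 A.2.1.1),
        Set.ncard_eq_toFinset_card _ (hfin A)]
    have h3 : 3 ≤ A.1.ncard := by
      have := A.2.2
      rw [← (hfin A).cast_ncard_eq] at this
      exact_mod_cast this
    have hsub : (hfin A).toFinset.erase [] ⊆ treeBall d (heightSet A.1) := fun u hu =>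
      mem_treeBall <| length_le_heightSet (hfin A) <|
        (hfin A).mem_toFinset.1 (Finset.mem_of_mem_erase hu)
    simp only [g, ι, φ, Finset.mem_powerset, heightSet_lt A.2.1, hsub, and_self, if_true,
      show 2 ≤ ((hfin A).toFinset.erase []).card by omega, hcard]
    push_cast
    ring
  have hg (h : ℕ) : ∑' F, g (h, F) =
      if h < k then P ^ h * Q * ∑ F ∈ (treeBall d h).powerset, φ F else 0 := by
    rw [tsum_eq_sum (s := (treeBall d h).powerset) fun F hF => if_neg fun h' => hF h'.2]
    split_ifs with hh
    · rw [Finset.mul_sum]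
      exact Finset.sum_congr rfl fun F hF => if_pos ⟨hh, hF⟩
    · exact Finset.sum_eq_zero fun F _ => if_neg fun h' => hh h'.1
  calc _ = ∑' A, g (ι A) := tsum_congr hfg
    _ ≤ ∑' x, g x := ENNReal.tsum_comp_le_tsum_of_injective hι g
    _ = _ := by
      rw [ENNReal.tsum_prod', tsum_congr hg, tsum_eq_sum (s := Finset.range k)]
      · exact Finset.sum_congr rfl fun h hh => if_pos (Finset.mem_range.1 hh)
      · exact fun h hh => if_neg (by simpa using hh)

lemma tsum_largeType_le (hd : 2 ≤ d) (P Q : ℝ≥0∞) :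
    ∑' A : LargeType d k, P ^ heightSet A.1 * Q ^ A.1.ncard * (A.1.ncard : ℝ≥0∞) ^ 2
      ≤ 9 * (d : ℝ≥0∞) ^ 2 * Q ^ 3 * (1 + Q) ^ d ^ k *
          ∑ h ∈ Finset.range k, (P * (d : ℝ≥0∞) ^ 2) ^ h := by
  refine (tsum_largeType_le_sum_powerset P Q).trans ?_
  rw [Finset.mul_sum]
  refine Finset.sum_le_sum fun h hh => ?_
  have hN := card_treeBall_lt hd h
  have hNk : d ^ (h + 1) ≤ d ^ k := Nat.pow_le_pow_right (by omega) (Finset.mem_range.1 hh)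
  have hNcast : ((treeBall d h).card : ℝ≥0∞) ≤ (d : ℝ≥0∞) ^ (h + 1) := by exact_mod_cast hN.le
  calc P ^ h * Q * ∑ F ∈ (treeBall d h).powerset,
        (if 2 ≤ F.card then Q ^ F.card * ((F.card : ℝ≥0∞) + 1) ^ 2 else 0)
      ≤ P ^ h * Q * (9 * ((d : ℝ≥0∞) ^ (h + 1)) ^ 2 * Q ^ 2 * (1 + Q) ^ d ^ k) := by
        gcongr
        refine (sum_powerset_le _ Q).trans ?_
        gcongr
        · exact le_self_add
        · exact hN.le.trans hNk
    _ = _ := by ring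

theorem meanUpper_type_le {p q : ℝ} {μ : Measure (Config d)} (hμ : IsPercolation d k p q μ)
    (hk : k ≠ 1) {A : Set (Vert d)} (hA : A ∈ typeSpace d k) :
    meanUpper d k μ A ≤ (d : ℝ≥0∞) ^ k * ENNReal.ofReal p ^ heightSet A *
      ENNReal.ofReal q ^ A.ncard * (1 - d * ENNReal.ofReal p)⁻¹ := by
  have hfin := finite_of_mem_typeSpace hA
  obtain ⟨u₀, hu₀, hlen⟩ := exists_length_eq_heightSet hfin ⟨_, hA.1⟩
  have := meanUpper_le hμ hk (hfin.mem_toFinset.2 hu₀)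
  rwa [hfin.coe_toFinset, hlen, ← Set.ncard_eq_toFinset_card A hfin] at this

theorem tsum_meanUpper_mul_sq_le {p q : ℝ} {μ : Measure (Config d)}
    (hμ : IsPercolation d k p q μ) (hd : 2 ≤ d) (hk : k ≠ 1) :
    ∑' A : LargeType d k, meanUpper d k μ A.1 * ((A.1.encard : ℕ∞) : ℝ≥0∞) ^ 2
      ≤ (d : ℝ≥0∞) ^ k * (1 - d * ENNReal.ofReal p)⁻¹ *
        (9 * (d : ℝ≥0∞) ^ 2 * ENNReal.ofReal q ^ 3 * (1 + ENNReal.ofReal q) ^ d ^ k *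
          ∑ h ∈ Finset.range k, (ENNReal.ofReal p * (d : ℝ≥0∞) ^ 2) ^ h) := by
  refine le_trans ?_ (mul_le_mul_right (tsum_largeType_le hd _ _) _)
  rw [← ENNReal.tsum_mul_left]
  refine ENNReal.tsum_le_tsum fun A => ?_
  rw [← (finite_of_mem_typeSpace A.2.1).cast_ncard_eq]
  calc _ ≤ ((d : ℝ≥0∞) ^ k * ENNReal.ofReal p ^ heightSet A.1 * ENNReal.ofReal q ^ A.1.ncard *
          (1 - d * ENNReal.ofReal p)⁻¹) * ((A.1.ncard : ℕ∞) : ℝ≥0∞) ^ 2 := by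
        gcongr
        exact meanUpper_type_le hμ hk A.2.1
    _ = _ := by push_cast; ring

end Types

lemma ENNReal.tendsto_natCast_mul_pow_nhds_zero {r : ℝ≥0∞} (hr : r < 1) :
    Tendsto (fun k : ℕ => (k : ℝ≥0∞) * r ^ k) atTop (nhds 0) := by
  lift r to NNReal using hr.ne_top
  have h := tendsto_self_mul_const_pow_of_lt_one r.coe_nonneg (by exact_mod_cast hr)
  rw [← ENNReal.ofReal_zero]
  refine (ENNReal.tendsto_ofReal h).congr fun k => ?_
  rw [ENNReal.ofReal_mul (Nat.cast_nonneg k), ENNReal.ofReal_natCast, ← NNReal.coe_pow,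
    ENNReal.ofReal_coe_nnreal, ENNReal.coe_pow]

lemma sum_range_pow_le {D P r : ℝ≥0∞} (hD : D ≠ 0) (hD' : D ≠ ⊤) (hDP : D * P ≤ r)
    (hDr : D⁻¹ ≤ r) (k : ℕ) :
    ∑ h ∈ Finset.range k, (P * D ^ 2) ^ h ≤ k * (r * D) ^ k := by
  have h1 : 1 ≤ r * D := by
    calc (1 : ℝ≥0∞) = D⁻¹ * D := (ENNReal.inv_mul_cancel hD hD').symm
      _ ≤ r * D := by gcongr
  calc ∑ h ∈ Finset.range k, (P * D ^ 2) ^ h ≤ ∑ _h ∈ Finset.range k, (r * D) ^ k := by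
        refine Finset.sum_le_sum fun h hh => ?_
        calc (P * D ^ 2) ^ h = (D * P * D) ^ h := by ring
          _ ≤ (r * D) ^ h := by gcongr
          _ ≤ (r * D) ^ k := pow_le_pow_right₀ h1 (Finset.mem_range.1 hh).le
    _ = k * (r * D) ^ k := by simp

/-- Since `q d^k = 1 - p d + s / d^k → 1 - p d ∈ (0, 1]`. -/
lemma eventually_qparam_bounds {d : ℕ} (hd : 2 ≤ d) {p : ℝ} (hp0 : 0 ≤ p) (hpd : p * d < 1)
    (s : ℝ) : ∀ᶠ k in atTop, 0 ≤ qparam d p s k ∧ qparam d p s k ≤ 1 ∧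
      qparam d p s k * (d : ℝ) ^ k ≤ 2 := by
  have hd1 : (1 : ℝ) < d := by exact_mod_cast hd
  have hlim : Tendsto (fun k : ℕ => qparam d p s k * (d : ℝ) ^ k) atTop (nhds (1 - p * d)) := by
    have h : Tendsto (fun k : ℕ => (1 - p * d) + s * ((d : ℝ)⁻¹) ^ k) atTop
        (nhds (1 - p * d)) := by
      simpa using tendsto_const_nhds.add ((tendsto_pow_atTop_nhds_zero_of_lt_one
        (inv_nonneg.2 (Nat.cast_nonneg d)) (inv_lt_one_of_one_lt₀ hd1)).const_mul s)
    refine h.congr fun k => ?_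
    have : (d : ℝ) ^ k ≠ 0 := by positivity
    rw [qparam, pow_mul', sq, inv_pow]
    field_simp
  have hpos : ∀ᶠ k in atTop, 0 < qparam d p s k * (d : ℝ) ^ k :=
    hlim.eventually (lt_mem_nhds (by linarith))
  have hlt : ∀ᶠ k in atTop, qparam d p s k * (d : ℝ) ^ k < 2 :=
    hlim.eventually (gt_mem_nhds (by nlinarith))
  filter_upwards [hpos, hlt, eventually_ge_atTop 1] with k hpos hlt hk
  have hdk : (2 : ℝ) ≤ (d : ℝ) ^ k := by
    calc (2 : ℝ) ≤ d := by exact_mod_cast hd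
      _ ≤ (d : ℝ) ^ k := le_self_pow₀ hd1.le (by omega)
  have hdk0 : (0 : ℝ) < (d : ℝ) ^ k := by positivity
  refine ⟨(pos_of_mul_pos_left hpos hdk0.le).le, ?_, hlt.le⟩
  nlinarith

lemma one_add_ofReal_pow_le {q a : ℝ} (hq : 0 ≤ q) {N : ℕ} (hqN : q * N ≤ a) :
    (1 + ENNReal.ofReal q) ^ N ≤ ENNReal.ofReal (Real.exp a) := by
  rw [← ENNReal.ofReal_one, ← ENNReal.ofReal_add zero_le_one hq,
    ← ENNReal.ofReal_pow (by linarith)]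
  refine ENNReal.ofReal_le_ofReal ?_
  calc (1 + q) ^ N ≤ Real.exp q ^ N := by
        gcongr
        linarith [Real.add_one_le_exp q]
    _ = Real.exp (q * N) := by rw [← Real.exp_nat_mul, mul_comm]
    _ ≤ Real.exp a := Real.exp_le_exp.2 hqN

theorem pow_mul_tsum_meanUpper_le {d k : ℕ} {p q : ℝ} {μ : Measure (Config d)}
    (hμ : IsPercolation d k p q μ) (hd : 2 ≤ d) (hk : k ≠ 1) (hq0 : 0 ≤ q)
    (hqd : q * (d : ℝ) ^ k ≤ 2) :
    (d : ℝ≥0∞) ^ k * ∑' A : LargeType d k,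
        meanUpper d k μ A.1 * ((A.1.encard : ℕ∞) : ℝ≥0∞) ^ 2
      ≤ 72 * (1 - d * ENNReal.ofReal p)⁻¹ * ENNReal.ofReal (Real.exp 2) * (d : ℝ≥0∞) ^ 2 *
        (k * max ((d : ℝ≥0∞) * ENNReal.ofReal p) (d : ℝ≥0∞)⁻¹ ^ k) := by
  have hD0 : (d : ℝ≥0∞) ≠ 0 := by simp; omega
  have hqd' : q * ((d ^ k : ℕ) : ℝ) ≤ 2 := by push_cast; exact hqd
  set D : ℝ≥0∞ := (d : ℝ≥0∞)
  set P := ENNReal.ofReal p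
  set Q := ENNReal.ofReal q
  set r := max (D * P) D⁻¹
  calc D ^ k * ∑' A : LargeType d k, meanUpper d k μ A.1 * ((A.1.encard : ℕ∞) : ℝ≥0∞) ^ 2
      ≤ D ^ k * (D ^ k * (1 - D * P)⁻¹ * (9 * D ^ 2 * Q ^ 3 * (1 + Q) ^ d ^ k *
          ∑ h ∈ Finset.range k, (P * D ^ 2) ^ h)) := by
        gcongr
        exact tsum_meanUpper_mul_sq_le hμ hd hk
    _ ≤ D ^ k * (D ^ k * (1 - D * P)⁻¹ * (9 * D ^ 2 * Q ^ 3 * ENNReal.ofReal (Real.exp 2) *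
          (k * (r * D) ^ k))) := by
        gcongr
        · exact one_add_ofReal_pow_le hq0 hqd'
        · exact sum_range_pow_le hD0 (ENNReal.natCast_ne_top d) (le_max_left _ _)
            (le_max_right _ _) k
    _ = 9 * (1 - D * P)⁻¹ * ENNReal.ofReal (Real.exp 2) * D ^ 2 *
          (((d ^ k : ℕ) : ℝ≥0∞) * Q) ^ 3 * (k * r ^ k) := by push_cast; ring
    _ ≤ 9 * (1 - D * P)⁻¹ * ENNReal.ofReal (Real.exp 2) * D ^ 2 * 2 ^ 3 * (k * r ^ k) := by
        gcongr
        rw [← ENNReal.ofReal_natCast, ← ENNReal.ofReal_mul (Nat.cast_nonneg _), mul_comm]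
        simpa using ENNReal.ofReal_le_ofReal hqd'
    _ = _ := by ring

/-- **Lemma 3.10** (de Lima–Szabó–Valesin): under the parametrization
`q = (1-pd)/d^k + s/d^{2k}`, we have `d^k · Σ_{A ∈ 𝒜, |A| ≥ 3} M̄(A)·|A|² → 0`
as `k → ∞`. -/
theorem meanUpper_large_types_vanish (d : ℕ) (hd : 2 ≤ d)
    (p : ℝ) (hp0 : 0 ≤ p) (hpd : p * d < 1) (s : ℝ)
    (μ : ℕ → Measure (Config d))
    (hμ : ∀ k, 2 ≤ k → qparam d p s k ∈ Set.Icc (0 : ℝ) 1 →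
      IsPercolation d k p (qparam d p s k) (μ k)) :
    Tendsto
      (fun k : ℕ => (d : ℝ≥0∞) ^ k *
        ∑' A : {A : Set (Vert d) // A ∈ typeSpace d k ∧ 3 ≤ A.encard},
          meanUpper d k (μ k) A.1 * ((A.1.encard : ℕ∞) : ℝ≥0∞) ^ 2)
      atTop (nhds 0) := by
  have hDP : (d : ℝ≥0∞) * ENNReal.ofReal p < 1 := by
    rw [← ENNReal.ofReal_natCast, ← ENNReal.ofReal_mul (Nat.cast_nonneg _), ENNReal.ofReal_lt_one]
    linarith
  have hr : max ((d : ℝ≥0∞) * ENNReal.ofReal p) (d : ℝ≥0∞)⁻¹ < 1 :=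
    max_lt hDP (ENNReal.inv_lt_one.2 (by exact_mod_cast hd))
  have hC : 72 * (1 - d * ENNReal.ofReal p)⁻¹ * ENNReal.ofReal (Real.exp 2) * (d : ℝ≥0∞) ^ 2
      ≠ ⊤ :=
    ENNReal.mul_ne_top (ENNReal.mul_ne_top (ENNReal.mul_ne_top ENNReal.ofNat_ne_top
      (ENNReal.inv_ne_top.2 (tsub_pos_of_lt hDP).ne')) ENNReal.ofReal_ne_top)
      (ENNReal.pow_ne_top (ENNReal.natCast_ne_top d))
  have hlim := ENNReal.Tendsto.const_mul (ENNReal.tendsto_natCast_mul_pow_nhds_zero hr) (.inr hC)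
  rw [mul_zero] at hlim
  refine tendsto_of_tendsto_of_tendsto_of_le_of_le' tendsto_const_nhds hlim
    (.of_forall fun _ => zero_le) ?_
  filter_upwards [eventually_qparam_bounds hd hp0 hpd s, eventually_ge_atTop 2]
    with k ⟨hq0, hq1, hqd⟩ hk
  exact pow_mul_tsum_meanUpper_le (hμ k hk ⟨hq0, hq1⟩) hd (by omega) hq0 hqd
end

section
/- Let S be a finite set and let (P_θ)_{θ ∈ (0,1)^N} be a family of probability measures on S such that θ ↦ P_θ(x) is continuous for every x ∈ S. Assume that for some θ₁ and some x̄ ∈ S we have P_{θ₁}(x̄) > 0. Then for any θ₂ satisfying Σ_{x ∈ S} |P_{θ₁}(x) − P_{θ₂}(x)| < P_{θ₁}(x̄), there exists a coupling of two random elements X and Y of S such that X ∼ P_{θ₁}, Y ∼ P_{θ₂}, and P({X = Y} ∪ {X = x̄} ∪ {Y = x̄}) = 1. -/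
open Finset


open Finset

lemma coupling_aux {S : Type*} [Fintype S] [DecidableEq S] (p q : S → ℝ)
    (hp : ∀ x, 0 ≤ p x) (hq : ∀ x, 0 ≤ q x)
    (hsum : ∑ x, p x = ∑ x, q x) (xbar : S)
    (hc : ∑ x, |p x - q x| < p xbar) :
    ∃ f : S × S → ℝ, (∀ z, 0 ≤ f z) ∧ (∀ a, ∑ y, f (a, y) = p a) ∧
      (∀ b, ∑ x, f (x, b) = q b) ∧
      (∀ z, f z ≠ 0 → z.1 = z.2 ∨ z.1 = xbar ∨ z.2 = xbar) := by
  set c : ℝ := p xbar - ∑ y ∈ univ.erase xbar, max (q y - p y) 0 with hcdef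
  have hcnn : 0 ≤ c := by
    have h1 : ∑ y ∈ univ.erase xbar, max (q y - p y) 0 ≤ ∑ x, |p x - q x| :=
      calc ∑ y ∈ univ.erase xbar, max (q y - p y) 0
          ≤ ∑ y ∈ univ.erase xbar, |p y - q y| :=
            Finset.sum_le_sum (fun i _ => by
              rw [abs_sub_comm]; exact max_le (le_abs_self _) (abs_nonneg _))
        _ ≤ ∑ x, |p x - q x| :=
            Finset.sum_le_sum_of_subset_of_nonneg (Finset.erase_subset _ _)
              (fun i _ _ => abs_nonneg _)
    have := h1.trans_lt hc
    simp only [hcdef]; linarith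
  have key : c + ∑ x ∈ univ.erase xbar, max (p x - q x) 0 = q xbar := by
    have h2 : ∀ x, max (p x - q x) 0 - max (q x - p x) 0 = p x - q x := by
      intro x
      rcases le_total (p x) (q x) with h | h
      · rw [max_eq_right (by linarith), max_eq_left (by linarith)]; ring
      · rw [max_eq_left (by linarith), max_eq_right (by linarith)]; ring
    have h4 : ∑ x, (p x - q x) = 0 := by rw [Finset.sum_sub_distrib, hsum]; ring
    have h3 : ∑ x ∈ univ.erase xbar, (p x - q x) = -(p xbar - q xbar) := by
      have h6 := Finset.sum_erase_add univ (fun x => p x - q x) (Finset.mem_univ xbar)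
      linarith
    have h5 : ∑ x ∈ univ.erase xbar, max (p x - q x) 0
        - ∑ x ∈ univ.erase xbar, max (q x - p x) 0 = -(p xbar - q xbar) := by
      rw [← Finset.sum_sub_distrib, Finset.sum_congr rfl (fun x _ => h2 x), h3]
    simp only [hcdef]; linarith
  refine ⟨fun z => if z.1 = z.2 then (if z.1 = xbar then c else min (p z.1) (q z.1))
      else if z.2 = xbar then max (p z.1 - q z.1) 0
      else if z.1 = xbar then max (q z.2 - p z.2) 0 else 0, ?_, ?_, ?_, ?_⟩
  · rintro ⟨x, y⟩
    dsimp only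
    split_ifs
    · exact hcnn
    · exact le_min (hp x) (hq x)
    · exact le_max_right _ _
    · exact le_max_right _ _
    · exact le_rfl
  · intro a
    by_cases ha : a = xbar
    · rw [ha]
      rw [← Finset.add_sum_erase _ _ (Finset.mem_univ xbar)]
      have heq : ∀ y ∈ univ.erase xbar,
          (fun z : S × S => if z.1 = z.2 then (if z.1 = xbar then c else min (p z.1) (q z.1))
            else if z.2 = xbar then max (p z.1 - q z.1) 0
            else if z.1 = xbar then max (q z.2 - p z.2) 0 else 0) (xbar, y)
          = max (q y - p y) 0 := by
        intro y hy
        rw [Finset.mem_erase] at hy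
        dsimp only
        rw [if_neg (fun h => hy.1 h.symm), if_neg hy.1, if_pos rfl]
      rw [Finset.sum_congr rfl heq]
      dsimp only
      rw [if_pos rfl, if_pos rfl]
      simp only [hcdef]; ring
    · have hsub : ({a, xbar} : Finset S) ⊆ univ := Finset.subset_univ _
      rw [← Finset.sum_subset hsub]
      · rw [Finset.sum_pair ha]
        dsimp only
        rw [if_pos rfl, if_neg ha, if_neg ha, if_pos rfl]
        rcases le_total (p a) (q a) with h | h
        · rw [min_eq_left h, max_eq_right (by linarith)]; ring
        · rw [min_eq_right h, max_eq_left (by linarith)]; ring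
      · intro y _ hy
        simp only [Finset.mem_insert, Finset.mem_singleton, not_or] at hy
        dsimp only
        rw [if_neg (fun h => hy.1 h.symm), if_neg hy.2, if_neg ha]
  · intro b
    by_cases hb : b = xbar
    · rw [hb]
      rw [← Finset.add_sum_erase _ _ (Finset.mem_univ xbar)]
      have heq : ∀ x ∈ univ.erase xbar,
          (fun z : S × S => if z.1 = z.2 then (if z.1 = xbar then c else min (p z.1) (q z.1))
            else if z.2 = xbar then max (p z.1 - q z.1) 0
            else if z.1 = xbar then max (q z.2 - p z.2) 0 else 0) (x, xbar)
          = max (p x - q x) 0 := by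
        intro x hx
        rw [Finset.mem_erase] at hx
        dsimp only
        rw [if_neg hx.1, if_pos rfl]
      rw [Finset.sum_congr rfl heq]
      dsimp only
      rw [if_pos rfl, if_pos rfl]
      exact key
    · have hsub : ({b, xbar} : Finset S) ⊆ univ := Finset.subset_univ _
      rw [← Finset.sum_subset hsub]
      · rw [Finset.sum_pair hb]
        dsimp only
        rw [if_pos rfl, if_neg hb, if_neg (fun h : xbar = b => hb h.symm),
          if_neg hb, if_pos rfl]
        rcases le_total (p b) (q b) with h | h
        · rw [min_eq_left h, max_eq_left (by linarith)]; ring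
        · rw [min_eq_right h, max_eq_right (by linarith)]; ring
      · intro x _ hx
        simp only [Finset.mem_insert, Finset.mem_singleton, not_or] at hx
        dsimp only
        rw [if_neg hx.1, if_neg hb, if_neg hx.2]
  · rintro ⟨x, y⟩ hz
    dsimp only at hz
    by_contra hcon
    push_neg at hcon
    obtain ⟨h1, h2, h3⟩ := hcon
    rw [if_neg h1, if_neg h3, if_neg h2] at hz
    exact hz rfl


open scoped ENNReal

/-- **Lemma 5.3** (coupling lemma, de Lima–Rolla–Valesin).  Let `(P_θ)_{θ ∈ (0,1)^N}`
be a family of probability measures on a finite set `S`, with `θ ↦ P_θ(x)` continuous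
for every `x`.  Assume `P_{θ₁}(x̄) > 0`.  Then for any `θ₂` with
`Σ_x |P_{θ₁}(x) − P_{θ₂}(x)| < P_{θ₁}(x̄)` there is a coupling `μ` of `P_{θ₁}` and
`P_{θ₂}` such that, with probability one, `X = Y` or `X = x̄` or `Y = x̄`. -/
theorem coupling_lemma {S : Type*} [Fintype S] (N : ℕ)
    (P : (Fin N → ℝ) → PMF S)
    (hcont : ∀ x : S,
      ContinuousOn (fun θ : Fin N → ℝ => ((P θ) x).toReal)
        {θ | ∀ i, θ i ∈ Set.Ioo (0 : ℝ) 1})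
    (θ₁ θ₂ : Fin N → ℝ)
    (hθ₁ : ∀ i, θ₁ i ∈ Set.Ioo (0 : ℝ) 1) (hθ₂ : ∀ i, θ₂ i ∈ Set.Ioo (0 : ℝ) 1)
    (xbar : S) (hxbar : 0 < ((P θ₁) xbar).toReal)
    (hclose : ∑ x : S, |((P θ₁) x).toReal - ((P θ₂) x).toReal| < ((P θ₁) xbar).toReal) :
    ∃ μ : PMF (S × S),
      μ.map Prod.fst = P θ₁ ∧
      μ.map Prod.snd = P θ₂ ∧
      ∀ z ∈ μ.support, z.1 = z.2 ∨ z.1 = xbar ∨ z.2 = xbar := by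
  classical
  set p : S → ℝ := fun x => ((P θ₁) x).toReal with hpdef
  set q : S → ℝ := fun x => ((P θ₂) x).toReal with hqdef
  have hp : ∀ x, 0 ≤ p x := fun x => ENNReal.toReal_nonneg
  have hq : ∀ x, 0 ≤ q x := fun x => ENNReal.toReal_nonneg
  have hsum1 : ∑ x, p x = 1 := by
    have h := (P θ₁).tsum_coe
    rw [tsum_fintype] at h
    have := ENNReal.toReal_sum (s := (univ : Finset S))
      (f := fun x => (P θ₁) x) (fun x _ => PMF.apply_ne_top _ _)
    rw [h] at this
    simpa [hpdef] using this.symm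
  have hsum2 : ∑ x, q x = 1 := by
    have h := (P θ₂).tsum_coe
    rw [tsum_fintype] at h
    have := ENNReal.toReal_sum (s := (univ : Finset S))
      (f := fun x => (P θ₂) x) (fun x _ => PMF.apply_ne_top _ _)
    rw [h] at this
    simpa [hqdef] using this.symm
  obtain ⟨f, hf0, hfrow, hfcol, hfsupp⟩ :=
    coupling_aux p q hp hq (by rw [hsum1, hsum2]) xbar hclose
  have htot : ∑ z : S × S, f z = 1 := by
    rw [Fintype.sum_prod_type]
    calc ∑ a, ∑ y, f (a, y) = ∑ a, p a := Finset.sum_congr rfl (fun a _ => hfrow a)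
      _ = 1 := hsum1
  have hg : ∑ z : S × S, ENNReal.ofReal (f z) = 1 := by
    rw [← ENNReal.ofReal_sum_of_nonneg (fun z _ => hf0 z), htot, ENNReal.ofReal_one]
  refine ⟨PMF.ofFintype (fun z => ENNReal.ofReal (f z)) hg, ?_, ?_, ?_⟩
  · ext a
    rw [PMF.map_apply, tsum_fintype]
    calc ∑ z : S × S, (if a = z.1 then (PMF.ofFintype (fun z => ENNReal.ofReal (f z)) hg) z else 0)
        = ∑ x, ∑ y, (if a = x then ENNReal.ofReal (f (x, y)) else 0) := by
          rw [Fintype.sum_prod_type]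
          exact Finset.sum_congr rfl (fun x _ => Finset.sum_congr rfl (fun y _ => by
            rw [PMF.ofFintype_apply]))
      _ = ∑ y, ENNReal.ofReal (f (a, y)) := by
          rw [Finset.sum_comm]
          exact Finset.sum_congr rfl (fun y _ => by rw [Finset.sum_ite_eq]; simp)
      _ = ENNReal.ofReal (∑ y, f (a, y)) :=
          (ENNReal.ofReal_sum_of_nonneg (fun y _ => hf0 _)).symm
      _ = ENNReal.ofReal (p a) := by rw [hfrow a]
      _ = (P θ₁) a := ENNReal.ofReal_toReal (PMF.apply_ne_top _ _)
  · ext b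
    rw [PMF.map_apply, tsum_fintype]
    calc ∑ z : S × S, (if b = z.2 then (PMF.ofFintype (fun z => ENNReal.ofReal (f z)) hg) z else 0)
        = ∑ x, ∑ y, (if b = y then ENNReal.ofReal (f (x, y)) else 0) := by
          rw [Fintype.sum_prod_type]
          exact Finset.sum_congr rfl (fun x _ => Finset.sum_congr rfl (fun y _ => by
            rw [PMF.ofFintype_apply]))
      _ = ∑ x, ENNReal.ofReal (f (x, b)) :=
          Finset.sum_congr rfl (fun x _ => by rw [Finset.sum_ite_eq]; simp)
      _ = ENNReal.ofReal (∑ x, f (x, b)) :=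
          (ENNReal.ofReal_sum_of_nonneg (fun x _ => hf0 _)).symm
      _ = ENNReal.ofReal (q b) := by rw [hfcol b]
      _ = (P θ₂) b := ENNReal.ofReal_toReal (PMF.apply_ne_top _ _)
  · intro z hz
    rw [PMF.mem_support_iff, PMF.ofFintype_apply] at hz
    apply hfsupp
    intro h0
    rw [h0] at hz
    simp at hz
end
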